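/- arXiv:dg-ga/9603009 — 2 statements merged into one kernel-verified Lean document; each statement's English description precedes it below -/
import Mathlib

section
/- Let U ⊆ ℝⁿ be open and let 𝓛 : U × Matrix(n×k, ℝ) × Matrix(r×k, ℝ) → ℝ be smooth, written 𝓛(x, p, w), satisfying for each fixed x the fundamental equations in the entries of the stacked (n+r)×k matrix (p over w): ∂²𝓛/∂m_{i₁}^{K}∂m_{i₂}^{L} + ∂²𝓛/∂m_{i₂}^{K}∂m_{i₁}^{L} = 0 for all rows i₁, i₂ of the stacked matrix and all columns K, L. Define Δ𝓛(x, p, ŵ) := (−1)^r Σ_{K=1}^{k} Σ_{A=1}^{n} w'^K (∂²𝓛/∂x^A∂p_A^K)(x, p, w), where ŵ ∈ Matrix((r+1)×k, ℝ) has first r rows w and last row w'. Then Δ𝓛 satisfies, for each fixed x, the fundamental equations in the entries of the stacked (n+r+1)×k matrix (p over ŵ). -/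
open MeasureTheory
open scoped BigOperators

noncomputable section

/-- Product of matrices given as functions (entry `(i,k)` is `∑ j, M i j * N j k`). -/
def mmul {a b c : ℕ} (M : Fin a → Fin b → ℝ) (N : Fin b → Fin c → ℝ) :
    Fin a → Fin c → ℝ :=
  fun i k => ∑ j, M i j * N j k

/-- Determinant of a square matrix given as a function. -/
def fdet {a : ℕ} (M : Fin a → Fin a → ℝ) : ℝ :=
  Matrix.det (Matrix.of M)

/-- Partial derivative of a function of a matrix with respect to the `(i,j)` entry. -/
def pdM {a b : ℕ} (L : (Fin a → Fin b → ℝ) → ℝ) (i : Fin a) (j : Fin b)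
    (m : Fin a → Fin b → ℝ) : ℝ :=
  deriv (fun t : ℝ => L (fun i' j' => m i' j' + (if i' = i ∧ j' = j then t else 0))) 0

/-- Partial derivative of a function of a vector with respect to the `i`-th coordinate. -/
def pdV {a : ℕ} (f : (Fin a → ℝ) → ℝ) (i : Fin a) (x : Fin a → ℝ) : ℝ :=
  deriv (fun t : ℝ => f (fun i' => x i' + (if i' = i then t else 0))) 0

/-- The fundamental equations for a function of an `a × b` matrix:
for all rows `i₁, i₂` and columns `j₁, j₂`,
`∂²L/∂m_{i₁}^{j₁}∂m_{i₂}^{j₂} + ∂²L/∂m_{i₂}^{j₁}∂m_{i₁}^{j₂} = 0`. -/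
def FundEqs {a b : ℕ} (L : (Fin a → Fin b → ℝ) → ℝ) : Prop :=
  ∀ (i₁ i₂ : Fin a) (j₁ j₂ : Fin b) (m : Fin a → Fin b → ℝ),
    pdM (fun m' => pdM L i₂ j₂ m') i₁ j₁ m + pdM (fun m' => pdM L i₁ j₂ m') i₂ j₁ m = 0

/-- The velocity matrix of a path `γ`: `(vel γ t) F A = ∂γ^A/∂t^F (t)`. -/
def vel {r n : ℕ} (γ : (Fin r → ℝ) → (Fin n → ℝ)) (t : Fin r → ℝ) :
    Fin r → Fin n → ℝ :=
  fun F A => pdV (fun s => γ s A) F t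

/-- The matrix of gradients of a copath `f`: `(grad f x) A K = ∂f^K/∂x^A (x)`. -/
def grad {n k : ℕ} (f : (Fin n → ℝ) → (Fin k → ℝ)) (x : Fin n → ℝ) :
    Fin n → Fin k → ℝ :=
  fun A K => pdV (fun y => f y K) A x

/-- An even `r`-form on an open set `U ⊆ ℝⁿ`: a smooth function `L(x, ẋ)` of a point
`x` and an `r × n` matrix `ẋ` which is covariant (`L(x, h·ẋ) = det h · L(x, ẋ)` for
invertible `h`) and satisfies the fundamental equations in the entries of `ẋ`. -/
def IsEvenForm {n r : ℕ} (U : Set (Fin n → ℝ))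
    (L : (Fin n → ℝ) → (Fin r → Fin n → ℝ) → ℝ) : Prop :=
  ContDiffOn ℝ (⊤ : ℕ∞)
      (fun q : (Fin n → ℝ) × (Fin r → Fin n → ℝ) => L q.1 q.2)
      (U ×ˢ (Set.univ : Set (Fin r → Fin n → ℝ))) ∧
  (∀ x ∈ U, ∀ (xdot : Fin r → Fin n → ℝ) (h : Fin r → Fin r → ℝ), fdet h ≠ 0 →
    L x (mmul h xdot) = fdet h * L x xdot) ∧
  (∀ x ∈ U, FundEqs (L x))

/-- The differential of a Lagrangian of paths `L(x, ẋ)`: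
`ΔL(x, (ẋ; ẏ)) = (−1)^r Σ_A ẏ^A (∂L/∂x^A − Σ_{F,B} ẋ_F^B ∂²L/∂x^B∂ẋ_F^A)`,
where `ẋ` consists of the first `r` rows and `ẏ` is the last row of the argument. -/
def Dform {n r : ℕ} (L : (Fin n → ℝ) → (Fin r → Fin n → ℝ) → ℝ) :
    (Fin n → ℝ) → (Fin (r + 1) → Fin n → ℝ) → ℝ :=
  fun x M => (-1 : ℝ) ^ r * ∑ A, M (Fin.last r) A *
    (pdV (fun x' => L x' (fun F => M (Fin.castSucc F))) A x
      - ∑ F, ∑ B, M (Fin.castSucc F) B *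
          pdV (fun x' => pdM (L x') F A (fun G => M (Fin.castSucc G))) B x)

/-- An even mixed form of codegree `k` and additional degree `r` on an open set
`U ⊆ ℝⁿ`: a smooth function `𝓛(x, p, w)` which is right-covariant, left-covariant,
admissible, and satisfies the fundamental equations in the entries of the stacked
`(n+r) × k` matrix (`p` over `w`). -/
def IsMixedForm {n k r : ℕ} (U : Set (Fin n → ℝ))
    (L : (Fin n → ℝ) → (Fin n → Fin k → ℝ) → (Fin r → Fin k → ℝ) → ℝ) : Prop :=
  ContDiffOn ℝ (⊤ : ℕ∞)
      (fun q : (Fin n → ℝ) × (Fin n → Fin k → ℝ) × (Fin r → Fin k → ℝ) =>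
        L q.1 q.2.1 q.2.2)
      (U ×ˢ (Set.univ : Set ((Fin n → Fin k → ℝ) × (Fin r → Fin k → ℝ)))) ∧
  (∀ x ∈ U, ∀ (p : Fin n → Fin k → ℝ) (w : Fin r → Fin k → ℝ) (g : Fin k → Fin k → ℝ),
    fdet g ≠ 0 → L x (mmul p g) (mmul w g) = fdet g * L x p w) ∧
  (∀ x ∈ U, ∀ (p : Fin n → Fin k → ℝ) (w : Fin r → Fin k → ℝ) (h : Fin r → Fin r → ℝ),
    fdet h ≠ 0 → L x p (mmul h w) = fdet h * L x p w) ∧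
  (∀ x ∈ U, ∀ (p : Fin n → Fin k → ℝ) (w : Fin r → Fin k → ℝ) (a : Fin n → Fin r → ℝ),
    L x (p + mmul a w) w = L x p w) ∧
  (∀ x ∈ U, FundEqs (fun m : Fin (n + r) → Fin k → ℝ =>
    L x (fun A => m (Fin.castAdd r A)) (fun F => m (Fin.natAdd n F))))

/-- The differential of a mixed Lagrangian `𝓛(x, p, w)`:
`Δ𝓛(x, p, ŵ) = (−1)^r Σ_{K,A} w'^K ∂²𝓛/∂x^A∂p_A^K (x, p, w)`, where `ŵ` has first
`r` rows `w` and last row `w'`. -/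
def Dmix {n k r : ℕ}
    (L : (Fin n → ℝ) → (Fin n → Fin k → ℝ) → (Fin r → Fin k → ℝ) → ℝ) :
    (Fin n → ℝ) → (Fin n → Fin k → ℝ) → (Fin (r + 1) → Fin k → ℝ) → ℝ :=
  fun x p what => (-1 : ℝ) ^ r * ∑ K, ∑ A, what (Fin.last r) K *
    pdV (fun x' => pdM (fun p' => L x' p' (fun F => what (Fin.castSucc F))) A K p) A x

/-- An even dual form of codegree `k` on an open set `U ⊆ ℝⁿ`: a smooth function
`𝓛(x, p)` of a point `x` and an `n × k` matrix `p` of momenta which is covariant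
(`𝓛(x, p·g) = det g · 𝓛(x, p)` for invertible `g`) and satisfies the fundamental
equations in the entries of `p`. -/
def IsDualForm {n k : ℕ} (U : Set (Fin n → ℝ))
    (L : (Fin n → ℝ) → (Fin n → Fin k → ℝ) → ℝ) : Prop :=
  ContDiffOn ℝ (⊤ : ℕ∞)
      (fun q : (Fin n → ℝ) × (Fin n → Fin k → ℝ) => L q.1 q.2)
      (U ×ˢ (Set.univ : Set (Fin n → Fin k → ℝ))) ∧
  (∀ x ∈ U, ∀ (p : Fin n → Fin k → ℝ) (g : Fin k → Fin k → ℝ), fdet g ≠ 0 →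
    L x (mmul p g) = fdet g * L x p) ∧
  (∀ x ∈ U, FundEqs (L x))

/-- The identity matrix as a function. -/
def idm (n : ℕ) : Fin n → Fin n → ℝ := fun i j => if i = j then 1 else 0

/-!
Regard `𝓛` as a function `F` of `x` and of the stacked matrix `m = (p; w)`, and put
`h_K = ∑_A ∂²F/∂x^A∂p_A^K`, so that `Δ𝓛 = (-1)^r ∑_K w'^K h_K` is linear in the new row `w'`.
Two derivatives of `Δ𝓛` along entries of old rows fall on the `h_K`, which inherit the
fundamental equations from `F` because partial derivatives commute; two derivatives along the
new row give zero. For an entry `(ι, j₁)` of an old row and the new row, the two terms add up to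
`∂h_{j₂}/∂m_ι^{j₁} + ∂h_{j₁}/∂m_ι^{j₂}
  = ∑_A ∂/∂x^A (∂²F/∂m_ι^{j₁}∂p_A^{j₂} + ∂²F/∂p_A^{j₁}∂m_ι^{j₂})`,
which vanishes by the fundamental equation of `F` for the rows `ι` and `A`.
-/

open scoped ContDiff

section DirDeriv

variable {E E' : Type*} [NormedAddCommGroup E] [NormedSpace ℝ E]
  [NormedAddCommGroup E'] [NormedSpace ℝ E'] {O : Set E}

def dirDeriv (v : E) (g : E → ℝ) : E → ℝ := fun q => fderiv ℝ g q v

lemma ContDiffOn.differentiableAt_of_isOpen {g : E → ℝ} (hg : ContDiffOn ℝ ∞ g O)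
    (hO : IsOpen O) {q : E} (hq : q ∈ O) : DifferentiableAt ℝ g q :=
  (hg.differentiableOn (by simp)).differentiableAt (hO.mem_nhds hq)

lemma ContDiffOn.dirDeriv {g : E → ℝ} (hg : ContDiffOn ℝ ∞ g O) (hO : IsOpen O) (v : E) :
    ContDiffOn ℝ ∞ (dirDeriv v g) O :=
  ((contDiffOn_infty_iff_fderiv_of_isOpen hO).1 hg).2.clm_apply contDiffOn_const

lemma deriv_comp_line_eq_dirDeriv {g : E → ℝ} {q : E} (hg : DifferentiableAt ℝ g q) (v : E) :
    deriv (fun t : ℝ => g (q + t • v)) 0 = dirDeriv v g q :=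
  hg.lineDeriv_eq_fderiv

lemma dirDeriv_congr (hO : IsOpen O) {f g : E → ℝ} (h : Set.EqOn f g O) {q : E} (hq : q ∈ O)
    (v : E) : dirDeriv v f q = dirDeriv v g q := by
  rw [dirDeriv, dirDeriv, (Filter.eventuallyEq_of_mem (hO.mem_nhds hq) h).fderiv_eq]

@[simp] lemma dirDeriv_zero_left (g : E → ℝ) (q : E) : dirDeriv 0 g q = 0 := by
  simp [dirDeriv]

lemma dirDeriv_comm {g : E → ℝ} (hg : ContDiffOn ℝ ∞ g O) (hO : IsOpen O) {q : E} (hq : q ∈ O)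
    (u v : E) : dirDeriv u (dirDeriv v g) q = dirDeriv v (dirDeriv u g) q := by
  have hg' := hg.contDiffAt (hO.mem_nhds hq)
  have hd : DifferentiableAt ℝ (fderiv ℝ g) q :=
    (((contDiffOn_infty_iff_fderiv_of_isOpen hO).1 hg).2.contDiffAt
      (hO.mem_nhds hq)).differentiableAt (by simp)
  have hsecond : ∀ a b : E, dirDeriv a (dirDeriv b g) q = fderiv ℝ (fderiv ℝ g) q a b := by
    intro a b
    change fderiv ℝ (fun y => fderiv ℝ g y b) q a = _
    rw [fderiv_clm_apply hd (differentiableAt_const b)]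
    simp
  rw [hsecond, hsecond, hg'.isSymmSndFDerivAt (by simpa using ENat.LEInfty.out) u v]

lemma dirDeriv_add_eq_zero (hO : IsOpen O) {f₁ f₂ : E → ℝ} {q : E} (hq : q ∈ O)
    (hf₁ : DifferentiableAt ℝ f₁ q) (hf₂ : DifferentiableAt ℝ f₂ q)
    (hsum : ∀ y ∈ O, f₁ y + f₂ y = 0) (v : E) :
    dirDeriv v f₁ q + dirDeriv v f₂ q = 0 := by
  have hzero : Set.EqOn (fun y => f₁ y + f₂ y) (fun _ => 0) O := hsum
  have := dirDeriv_congr hO hzero hq v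
  simpa [dirDeriv, fderiv_fun_add hf₁ hf₂] using this

lemma dirDeriv_sum {ι : Type*} {s : Finset ι} {f : ι → E → ℝ} {q : E}
    (hf : ∀ i ∈ s, DifferentiableAt ℝ (f i) q) (v : E) :
    dirDeriv v (fun y => ∑ i ∈ s, f i y) q = ∑ i ∈ s, dirDeriv v (f i) q := by
  simp [dirDeriv, fderiv_fun_sum hf]

lemma dirDeriv_comp_clm {f : E' → ℝ} (π : E →L[ℝ] E') {q : E} (hf : DifferentiableAt ℝ f (π q))
    (v : E) : dirDeriv v (fun y => f (π y)) q = dirDeriv (π v) f (π q) := by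
  simp [dirDeriv, fderiv_fun_comp q hf π.differentiableAt]

lemma dirDeriv_sum_clm_mul {ι : Type*} [Fintype ι] (ℓ : ι → E →L[ℝ] ℝ) (π : E →L[ℝ] E')
    {h : ι → E' → ℝ} {q : E} (hh : ∀ i, DifferentiableAt ℝ (h i) (π q)) (v : E) :
    dirDeriv v (fun y => ∑ i, ℓ i y * h i (π y)) q
      = ∑ i, (ℓ i v * h i (π q) + ℓ i q * dirDeriv (π v) (h i) (π q)) := by
  have hcomp : ∀ i, DifferentiableAt ℝ (fun y => h i (π y)) q :=
    fun i => (hh i).comp q π.differentiableAt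
  rw [dirDeriv_sum (f := fun i y => ℓ i y * h i (π y))
    fun i _ => (ℓ i).differentiableAt.mul (hcomp i)]
  refine Finset.sum_congr rfl fun i _ => ?_
  rw [← dirDeriv_comp_clm π (hh i)]
  simp [dirDeriv, fderiv_fun_mul (ℓ i).differentiableAt (hcomp i)]
  ring

end DirDeriv

lemma pdM_const_mul {a b : ℕ} (f : (Fin a → Fin b → ℝ) → ℝ) (c : ℝ) (i : Fin a) (j : Fin b) :
    pdM (fun m => c * f m) i j = fun m => c * pdM f i j m :=
  funext fun _ => deriv_const_mul_field c

lemma FundEqs.const_mul {a b : ℕ} {f : (Fin a → Fin b → ℝ) → ℝ} (hf : FundEqs f) (c : ℝ) :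
    FundEqs (fun m => c * f m) := by
  intro i₁ i₂ j₁ j₂ m
  simp only [pdM_const_mul]
  rw [← mul_add, hf, mul_zero]

section MixedSpace

abbrev MixedSpace (n k s : ℕ) : Type :=
  (Fin n → ℝ) × (Fin n → Fin k → ℝ) × (Fin s → Fin k → ℝ)

variable {n k s : ℕ}

def stack (x : Fin n → ℝ) (m : Fin (n + s) → Fin k → ℝ) : MixedSpace n k s :=
  (x, fun A => m (Fin.castAdd s A), fun F => m (Fin.natAdd n F))

def stackedUnit (i : Fin (n + s)) (j : Fin k) : MixedSpace n k s :=
  (0, fun A K => if Fin.castAdd s A = i ∧ K = j then 1 else 0,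
    fun F K => if Fin.natAdd n F = i ∧ K = j then 1 else 0)

lemma stack_add_smul_stackedUnit (x : Fin n → ℝ) (m : Fin (n + s) → Fin k → ℝ)
    (i : Fin (n + s)) (j : Fin k) (t : ℝ) :
    stack x (fun i' j' => m i' j' + if i' = i ∧ j' = j then t else 0)
      = stack x m + t • stackedUnit i j := by
  ext <;> simp [stack, stackedUnit]

lemma pdM_comp_stack {W : MixedSpace n k s → ℝ} {x : Fin n → ℝ} {m : Fin (n + s) → Fin k → ℝ}
    (hW : DifferentiableAt ℝ W (stack x m)) (i : Fin (n + s)) (j : Fin k) :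
    pdM (fun m' => W (stack x m')) i j m = dirDeriv (stackedUnit i j) W (stack x m) := by
  simp only [pdM, stack_add_smul_stackedUnit]
  exact deriv_comp_line_eq_dirDeriv hW _

def FundEqsOn (O : Set (MixedSpace n k s)) (W : MixedSpace n k s → ℝ) : Prop :=
  ∀ q ∈ O, ∀ (i₁ i₂ : Fin (n + s)) (j₁ j₂ : Fin k),
    dirDeriv (stackedUnit i₁ j₁) (dirDeriv (stackedUnit i₂ j₂) W) q
      + dirDeriv (stackedUnit i₂ j₁) (dirDeriv (stackedUnit i₁ j₂) W) q = 0

lemma fundEqsOn_iff_fundEqs_comp_stack {U : Set (Fin n → ℝ)} (hU : IsOpen U)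
    {W : MixedSpace n k s → ℝ} (hW : ContDiffOn ℝ ∞ W (U ×ˢ Set.univ)) :
    FundEqsOn (U ×ˢ Set.univ) W ↔ ∀ x ∈ U, FundEqs (fun m => W (stack x m)) := by
  have hO : IsOpen (U ×ˢ Set.univ : Set (MixedSpace n k s)) := hU.prod isOpen_univ
  have hpdM2 : ∀ x ∈ U, ∀ (i₁ i₂ : Fin (n + s)) (j₁ j₂ : Fin k) (m : Fin (n + s) → Fin k → ℝ),
      pdM (fun m' => pdM (fun m'' => W (stack x m'')) i₂ j₂ m') i₁ j₁ m
        = dirDeriv (stackedUnit i₁ j₁) (dirDeriv (stackedUnit i₂ j₂) W) (stack x m) := by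
    intro x hx i₁ i₂ j₁ j₂ m
    have hmem : ∀ m', stack x m' ∈ (U ×ˢ Set.univ : Set (MixedSpace n k s)) :=
      fun _ => ⟨hx, trivial⟩
    simp only [pdM_comp_stack (hW.differentiableAt_of_isOpen hO (hmem _))]
    exact pdM_comp_stack ((hW.dirDeriv hO _).differentiableAt_of_isOpen hO (hmem m)) i₁ j₁
  constructor
  · intro h x hx i₁ i₂ j₁ j₂ m
    rw [hpdM2 x hx, hpdM2 x hx]
    exact h _ ⟨hx, trivial⟩ i₁ i₂ j₁ j₂
  · rintro h ⟨x, p, w⟩ ⟨hx, -⟩ i₁ i₂ j₁ j₂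
    have hstack : stack x (Fin.append p w) = (x, p, w) := by
      simp [stack]
    rw [← hstack, ← hpdM2 x hx, ← hpdM2 x hx]
    exact h x hx i₁ i₂ j₁ j₂ _

end MixedSpace

section LastRowExtension

variable {n k s : ℕ}

def dropLastRow : MixedSpace n k (s + 1) →L[ℝ] MixedSpace n k s :=
  (ContinuousLinearMap.id ℝ _).prodMap ((ContinuousLinearMap.id ℝ _).prodMap
    (ContinuousLinearMap.pi fun F : Fin s => ContinuousLinearMap.proj (R := ℝ) F.castSucc))

@[simp] lemma dropLastRow_apply (q : MixedSpace n k (s + 1)) :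
    dropLastRow q = (q.1, q.2.1, fun F => q.2.2 F.castSucc) := rfl

def lastRowEntry (K : Fin k) : MixedSpace n k (s + 1) →L[ℝ] ℝ :=
  (ContinuousLinearMap.proj (R := ℝ) (φ := fun _ : Fin k => ℝ) K).comp
    ((ContinuousLinearMap.proj (Fin.last s)).comp
      ((ContinuousLinearMap.snd ℝ _ _).comp (ContinuousLinearMap.snd ℝ _ _)))

@[simp] lemma lastRowEntry_apply (K : Fin k) (q : MixedSpace n k (s + 1)) :
    lastRowEntry K q = q.2.2 (Fin.last s) K := rfl

lemma dropLastRow_preimage_prod_univ (U : Set (Fin n → ℝ)) :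
    dropLastRow ⁻¹' (U ×ˢ Set.univ : Set (MixedSpace n k s)) = U ×ˢ Set.univ := by
  ext; simp

def lastRowExtension (h : Fin k → MixedSpace n k s → ℝ) (q : MixedSpace n k (s + 1)) : ℝ :=
  ∑ K, lastRowEntry K q * h K (dropLastRow q)

lemma dropLastRow_stackedUnit_castSucc (ι : Fin (n + s)) (j : Fin k) :
    dropLastRow (stackedUnit (s := s + 1) ι.castSucc j) = stackedUnit ι j := by
  ext <;> simp [stackedUnit, Fin.ext_iff]

lemma dropLastRow_stackedUnit_last (j : Fin k) :
    dropLastRow (stackedUnit (s := s + 1) (Fin.last (n + s)) j) = 0 := by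
  ext <;> simp [stackedUnit, Fin.ext_iff] <;> omega

lemma lastRowEntry_stackedUnit_castSucc (K : Fin k) (ι : Fin (n + s)) (j : Fin k) :
    lastRowEntry K (stackedUnit (s := s + 1) ι.castSucc j) = 0 := by
  simp [stackedUnit, Fin.ext_iff]
  omega

lemma lastRowEntry_stackedUnit_last (K j : Fin k) :
    lastRowEntry K (stackedUnit (s := s + 1) (Fin.last (n + s)) j) = if K = j then 1 else 0 := by
  simp [stackedUnit, Fin.ext_iff]

variable {O : Set (MixedSpace n k s)} {h : Fin k → MixedSpace n k s → ℝ}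

lemma dirDeriv_lastRowExtension {q : MixedSpace n k (s + 1)}
    (hh : ∀ K, DifferentiableAt ℝ (h K) (dropLastRow q)) (v : MixedSpace n k (s + 1)) :
    dirDeriv v (lastRowExtension h) q = ∑ K, (lastRowEntry K v * h K (dropLastRow q)
      + lastRowEntry K q * dirDeriv (dropLastRow v) (h K) (dropLastRow q)) :=
  dirDeriv_sum_clm_mul _ _ hh v

lemma eqOn_dirDeriv_stackedUnit_last_lastRowExtension (hO : IsOpen O)
    (hh : ∀ K, ContDiffOn ℝ ∞ (h K) O) (j : Fin k) :
    Set.EqOn (dirDeriv (stackedUnit (s := s + 1) (Fin.last (n + s)) j) (lastRowExtension h))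
      (fun q => h j (dropLastRow q)) (dropLastRow ⁻¹' O) := fun q hq => by
  simp only [dirDeriv_lastRowExtension fun K => (hh K).differentiableAt_of_isOpen hO hq,
    dropLastRow_stackedUnit_last, lastRowEntry_stackedUnit_last, dirDeriv_zero_left]
  simp

lemma eqOn_dirDeriv_stackedUnit_castSucc_lastRowExtension (hO : IsOpen O)
    (hh : ∀ K, ContDiffOn ℝ ∞ (h K) O) (ι : Fin (n + s)) (j : Fin k) :
    Set.EqOn (dirDeriv (stackedUnit (s := s + 1) ι.castSucc j) (lastRowExtension h))
      (lastRowExtension fun K => dirDeriv (stackedUnit ι j) (h K)) (dropLastRow ⁻¹' O) :=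
  fun q hq => by
    simp only [dirDeriv_lastRowExtension fun K => (hh K).differentiableAt_of_isOpen hO hq,
      dropLastRow_stackedUnit_castSucc, lastRowEntry_stackedUnit_castSucc, zero_mul, zero_add,
      lastRowExtension]

lemma ContDiffOn.lastRowExtension (hh : ∀ K, ContDiffOn ℝ ∞ (h K) O) :
    ContDiffOn ℝ ∞ (lastRowExtension h) (dropLastRow ⁻¹' O) :=
  ContDiffOn.sum fun K _ => (lastRowEntry K).contDiff.contDiffOn.mul
    ((hh K).comp dropLastRow.contDiff.contDiffOn (Set.mapsTo_preimage _ _))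

theorem fundEqsOn_lastRowExtension (hO : IsOpen O) (hh : ∀ K, ContDiffOn ℝ ∞ (h K) O)
    (hfund : ∀ K, FundEqsOn O (h K))
    (hswap : ∀ q ∈ O, ∀ (ι : Fin (n + s)) (j₁ j₂ : Fin k),
      dirDeriv (stackedUnit ι j₁) (h j₂) q + dirDeriv (stackedUnit ι j₂) (h j₁) q = 0) :
    FundEqsOn (dropLastRow ⁻¹' O) (lastRowExtension h) := by
  have hO' : IsOpen (dropLastRow ⁻¹' O) := hO.preimage dropLastRow.continuous
  have hh' : ∀ ι j K, ContDiffOn ℝ ∞ (dirDeriv (stackedUnit ι j) (h K)) O :=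
    fun _ _ K => (hh K).dirDeriv hO _
  intro q hq i₁ i₂ j₁ j₂
  have hlast_last : ∀ j j', dirDeriv (stackedUnit (s := s + 1) (Fin.last (n + s)) j)
      (dirDeriv (stackedUnit (Fin.last (n + s)) j') (lastRowExtension h)) q = 0 := by
    intro j j'
    rw [dirDeriv_congr hO' (eqOn_dirDeriv_stackedUnit_last_lastRowExtension hO hh j') hq,
      dirDeriv_comp_clm _ ((hh j').differentiableAt_of_isOpen hO hq),
      dropLastRow_stackedUnit_last, dirDeriv_zero_left]
  have hold_last : ∀ ι j j', dirDeriv (stackedUnit (s := s + 1) ι.castSucc j)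
      (dirDeriv (stackedUnit (Fin.last (n + s)) j') (lastRowExtension h)) q
        = dirDeriv (stackedUnit ι j) (h j') (dropLastRow q) := by
    intro ι j j'
    rw [dirDeriv_congr hO' (eqOn_dirDeriv_stackedUnit_last_lastRowExtension hO hh j') hq,
      dirDeriv_comp_clm _ ((hh j').differentiableAt_of_isOpen hO hq),
      dropLastRow_stackedUnit_castSucc]
  have hlast_old : ∀ ι j j', dirDeriv (stackedUnit (s := s + 1) (Fin.last (n + s)) j)
      (dirDeriv (stackedUnit ι.castSucc j') (lastRowExtension h)) q
        = dirDeriv (stackedUnit ι j') (h j) (dropLastRow q) := by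
    intro ι j j'
    rw [dirDeriv_congr hO' (eqOn_dirDeriv_stackedUnit_castSucc_lastRowExtension hO hh ι j') hq,
      eqOn_dirDeriv_stackedUnit_last_lastRowExtension hO (hh' ι j') j hq]
  have hold_old : ∀ ι ι' j j', dirDeriv (stackedUnit (s := s + 1) ι.castSucc j)
      (dirDeriv (stackedUnit ι'.castSucc j') (lastRowExtension h)) q
        = lastRowExtension (fun K => dirDeriv (stackedUnit ι j)
            (dirDeriv (stackedUnit ι' j') (h K))) q := by
    intro ι ι' j j'
    rw [dirDeriv_congr hO' (eqOn_dirDeriv_stackedUnit_castSucc_lastRowExtension hO hh ι' j') hq,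
      eqOn_dirDeriv_stackedUnit_castSucc_lastRowExtension hO (hh' ι' j') ι j hq]
  rcases Fin.eq_castSucc_or_eq_last (n := n + s) i₁ with ⟨ι₁, rfl⟩ | rfl <;>
    rcases Fin.eq_castSucc_or_eq_last (n := n + s) i₂ with ⟨ι₂, rfl⟩ | rfl
  · rw [hold_old, hold_old, lastRowExtension, lastRowExtension, ← Finset.sum_add_distrib]
    exact Finset.sum_eq_zero fun K _ => by rw [← mul_add, hfund K _ hq, mul_zero]
  · rw [hold_last, hlast_old]
    exact hswap _ hq ι₁ j₁ j₂
  · rw [hlast_old, hold_last, add_comm]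
    exact hswap _ hq ι₂ j₁ j₂
  · rw [hlast_last, add_zero]

end LastRowExtension

section XDivergence

variable {n k s : ℕ} {O : Set (MixedSpace n k s)} {W : MixedSpace n k s → ℝ}

def xUnit (A : Fin n) : MixedSpace n k s := (fun i => if i = A then 1 else 0, 0, 0)

def xDivergence (W : MixedSpace n k s → ℝ) (K : Fin k) : MixedSpace n k s → ℝ :=
  fun q => ∑ A, dirDeriv (xUnit A) (dirDeriv (stackedUnit (Fin.castAdd s A) K) W) q

lemma ContDiffOn.xDivergence (hW : ContDiffOn ℝ ∞ W O) (hO : IsOpen O) (K : Fin k) :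
    ContDiffOn ℝ ∞ (xDivergence W K) O :=
  ContDiffOn.sum fun _ _ => (hW.dirDeriv hO _).dirDeriv hO _

lemma dirDeriv_xDivergence (hO : IsOpen O) (hW : ContDiffOn ℝ ∞ W O) {q : MixedSpace n k s}
    (hq : q ∈ O) (v : MixedSpace n k s) (K : Fin k) :
    dirDeriv v (xDivergence W K) q = xDivergence (dirDeriv v W) K q := by
  unfold xDivergence
  rw [dirDeriv_sum fun A _ =>
    ((hW.dirDeriv hO _).dirDeriv hO _).differentiableAt_of_isOpen hO hq]
  refine Finset.sum_congr rfl fun A _ => ?_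
  rw [dirDeriv_comm (hW.dirDeriv hO _) hO hq,
    dirDeriv_congr hO (fun y hy => dirDeriv_comm hW hO hy v _) hq]

theorem fundEqsOn_xDivergence (hO : IsOpen O) (hW : ContDiffOn ℝ ∞ W O) (hfund : FundEqsOn O W)
    (K : Fin k) : FundEqsOn O (xDivergence W K) := by
  intro q hq i₁ i₂ j₁ j₂
  have hsecond : ∀ a b, dirDeriv a (dirDeriv b (xDivergence W K)) q
      = xDivergence (dirDeriv a (dirDeriv b W)) K q := fun a b => by
    rw [dirDeriv_congr hO (fun y hy => dirDeriv_xDivergence hO hW hy b K) hq,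
      dirDeriv_xDivergence hO (hW.dirDeriv hO b) hq]
  have hsmooth : ∀ a b, ContDiffOn ℝ ∞ (dirDeriv a (dirDeriv b W)) O :=
    fun a b => (hW.dirDeriv hO b).dirDeriv hO a
  rw [hsecond, hsecond, xDivergence, xDivergence, ← Finset.sum_add_distrib]
  refine Finset.sum_eq_zero fun A _ => dirDeriv_add_eq_zero hO hq
    (((hsmooth _ _).dirDeriv hO _).differentiableAt_of_isOpen hO hq)
    (((hsmooth _ _).dirDeriv hO _).differentiableAt_of_isOpen hO hq) (fun y hy => ?_) _
  exact dirDeriv_add_eq_zero hO hy ((hsmooth _ _).differentiableAt_of_isOpen hO hy)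
    ((hsmooth _ _).differentiableAt_of_isOpen hO hy) (fun z hz => hfund z hz i₁ i₂ j₁ j₂) _

theorem dirDeriv_xDivergence_add_swap (hO : IsOpen O) (hW : ContDiffOn ℝ ∞ W O)
    (hfund : FundEqsOn O W) {q : MixedSpace n k s} (hq : q ∈ O) (ι : Fin (n + s))
    (j₁ j₂ : Fin k) :
    dirDeriv (stackedUnit ι j₁) (xDivergence W j₂) q
      + dirDeriv (stackedUnit ι j₂) (xDivergence W j₁) q = 0 := by
  rw [dirDeriv_xDivergence hO hW hq, dirDeriv_xDivergence hO hW hq, xDivergence, xDivergence,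
    ← Finset.sum_add_distrib]
  refine Finset.sum_eq_zero fun A _ => dirDeriv_add_eq_zero hO hq ?_ ?_ (fun y hy => ?_) _
  · exact ((hW.dirDeriv hO _).dirDeriv hO _).differentiableAt_of_isOpen hO hq
  · exact ((hW.dirDeriv hO _).dirDeriv hO _).differentiableAt_of_isOpen hO hq
  rw [dirDeriv_comm hW hO hy]
  exact hfund y hy ι (Fin.castAdd s A) j₁ j₂

end XDivergence

section Delta

variable {n k r : ℕ}

lemma pdM_eq_dirDeriv_stackedUnit {W : MixedSpace n k r → ℝ} {x : Fin n → ℝ}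
    {p : Fin n → Fin k → ℝ} {w : Fin r → Fin k → ℝ} (hW : DifferentiableAt ℝ W (x, p, w))
    (A : Fin n) (K : Fin k) :
    pdM (fun p' => W (x, p', w)) A K p
      = dirDeriv (stackedUnit (Fin.castAdd r A) K) W (x, p, w) := by
  have hline : ∀ t : ℝ, ((x, fun i j => p i j + if i = A ∧ j = K then t else 0, w)
      : MixedSpace n k r) = (x, p, w) + t • stackedUnit (Fin.castAdd r A) K := by
    intro t
    ext <;> simp [stackedUnit, Fin.ext_iff]
    omega
  simp only [pdM, hline]
  exact deriv_comp_line_eq_dirDeriv hW _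

lemma pdV_eq_dirDeriv_xUnit {U : Set (Fin n → ℝ)} (hU : IsOpen U) {x : Fin n → ℝ} (hx : x ∈ U)
    {p : Fin n → Fin k → ℝ} {w : Fin r → Fin k → ℝ} {W : MixedSpace n k r → ℝ}
    (hW : DifferentiableAt ℝ W (x, p, w)) {f : (Fin n → ℝ) → ℝ}
    (hf : ∀ x' ∈ U, f x' = W (x', p, w)) (A : Fin n) :
    pdV f A x = dirDeriv (xUnit A) W (x, p, w) := by
  set line : ℝ → Fin n → ℝ := fun t i => x i + if i = A then t else 0
  have hline : ∀ t, ((line t, p, w) : MixedSpace n k r) = (x, p, w) + t • xUnit A := by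
    intro t
    ext <;> simp [line, xUnit]
  have hcont : Continuous line :=
    continuous_pi fun i => continuous_const.add (by by_cases h : i = A <;> simp [h] <;> fun_prop)
  have hnear : f ∘ line =ᶠ[nhds 0] fun t => W ((x, p, w) + t • xUnit A) := by
    filter_upwards [hcont.continuousAt.preimage_mem_nhds (hU.mem_nhds (by simpa [line] using hx))]
      with t ht
    rw [Function.comp_apply, hf _ ht, hline]
  rw [pdV, show (fun t => f (fun i => x i + if i = A then t else 0)) = f ∘ line from rfl,
    hnear.deriv_eq]
  exact deriv_comp_line_eq_dirDeriv hW _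

lemma Dmix_eq_lastRowExtension {U : Set (Fin n → ℝ)} (hU : IsOpen U)
    {L : (Fin n → ℝ) → (Fin n → Fin k → ℝ) → (Fin r → Fin k → ℝ) → ℝ}
    (hL : ContDiffOn ℝ ∞ (fun q : MixedSpace n k r => L q.1 q.2.1 q.2.2) (U ×ˢ Set.univ))
    {x : Fin n → ℝ} (hx : x ∈ U) (p : Fin n → Fin k → ℝ) (ŵ : Fin (r + 1) → Fin k → ℝ) :
    Dmix L x p ŵ = (-1) ^ r * lastRowExtension
      (xDivergence fun q : MixedSpace n k r => L q.1 q.2.1 q.2.2) (x, p, ŵ) := by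
  have hO : IsOpen (U ×ˢ Set.univ : Set (MixedSpace n k r)) := hU.prod isOpen_univ
  have hdiff : ∀ {g : MixedSpace n k r → ℝ}, ContDiffOn ℝ ∞ g (U ×ˢ Set.univ) →
      ∀ {x'} (p' w'), x' ∈ U → DifferentiableAt ℝ g (x', p', w') :=
    fun hg _ _ _ hx' => hg.differentiableAt_of_isOpen hO ⟨hx', trivial⟩
  unfold Dmix lastRowExtension xDivergence
  congr 1
  refine Finset.sum_congr rfl fun K _ => ?_
  rw [Finset.mul_sum]
  refine Finset.sum_congr rfl fun A _ => ?_
  congr 1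
  exact pdV_eq_dirDeriv_xUnit hU hx (hdiff (hL.dirDeriv hO _) _ _ hx)
    (fun x' hx' => pdM_eq_dirDeriv_stackedUnit (hdiff hL _ _ hx') A K) A

end Delta

/-- If a smooth mixed Lagrangian `𝓛(x, p, w)` satisfies, for each
`x ∈ U`, the fundamental equations in the entries of the stacked `(n+r) × k` matrix
(`p` over `w`), then `Δ𝓛` satisfies, for each `x ∈ U`, the fundamental equations in
the entries of the stacked `(n+r+1) × k` matrix (`p` over `ŵ`). -/
theorem statement_15 (n k r : ℕ) (U : Set (Fin n → ℝ)) (hU : IsOpen U)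
    (L : (Fin n → ℝ) → (Fin n → Fin k → ℝ) → (Fin r → Fin k → ℝ) → ℝ)
    (hL : ContDiffOn ℝ (⊤ : ℕ∞)
      (fun q : (Fin n → ℝ) × (Fin n → Fin k → ℝ) × (Fin r → Fin k → ℝ) =>
        L q.1 q.2.1 q.2.2)
      (U ×ˢ (Set.univ : Set ((Fin n → Fin k → ℝ) × (Fin r → Fin k → ℝ)))))
    (hfund : ∀ x ∈ U, FundEqs (fun m : Fin (n + r) → Fin k → ℝ =>
      L x (fun A => m (Fin.castAdd r A)) (fun F => m (Fin.natAdd n F)))) :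
    ∀ x ∈ U, FundEqs (fun m : Fin (n + (r + 1)) → Fin k → ℝ =>
      Dmix L x (fun A => m (Fin.castAdd (r + 1) A)) (fun F => m (Fin.natAdd n F))) := by
  have hO : IsOpen (U ×ˢ Set.univ : Set (MixedSpace n k r)) := hU.prod isOpen_univ
  have hLfund := (fundEqsOn_iff_fundEqs_comp_stack hU hL).2 hfund
  have hΔsmooth := ContDiffOn.lastRowExtension fun K => hL.xDivergence hO K
  have hΔfund := fundEqsOn_lastRowExtension hO (fun K => hL.xDivergence hO K)
    (fundEqsOn_xDivergence hO hL hLfund)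
    (fun _ hq => dirDeriv_xDivergence_add_swap hO hL hLfund hq)
  rw [dropLastRow_preimage_prod_univ] at hΔsmooth hΔfund
  intro x hx
  convert ((fundEqsOn_iff_fundEqs_comp_stack hU hΔsmooth).1 hΔfund x hx).const_mul ((-1) ^ r)
    using 2 with m
  exact Dmix_eq_lastRowExtension hU hL hx _ _
end
end

section
/- Let U ⊆ ℝⁿ be open, k ≥ 1, and let 𝓛 be an even dual form of codegree k on U. Then (∂𝓛/∂p_A^k)(x, p) does not depend on the k-th column of p, so the function δ̄𝓛 : U × Matrix(n×(k−1), ℝ) → ℝ given by (δ̄𝓛)(x, p̂) := (−1)^{k−1} Σ_{A=1}^{n} (∂²𝓛/∂x^A∂p_A^k)(x, (p̂ | c)) is well-defined (independent of the choice of the appended k-th column c ∈ ℝⁿ). Moreover δ̄𝓛 is an even dual form of codegree k−1 on U, and if k ≥ 2 then δ̄(δ̄𝓛) = 0. -/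
open MeasureTheory
open scoped BigOperators

noncomputable section

/-- The differential of dual forms: for a dual Lagrangian `𝓛(x, p)` of codegree
`k+1`, `(δ̄𝓛)(x, p̂) := (−1)^k Σ_A ∂²𝓛/∂x^A∂p_A^{k+1} (x, (p̂ | 0))`. -/
def dbar {n : ℕ} (k : ℕ) (L : (Fin n → ℝ) → (Fin n → Fin (k + 1) → ℝ) → ℝ) :
    (Fin n → ℝ) → (Fin n → Fin k → ℝ) → ℝ :=
  fun x p => (-1 : ℝ) ^ k * ∑ A,
    pdV (fun x' => pdM (L x') A (Fin.last k) (fun B => Fin.snoc (p B) 0)) A x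

/-!
Covariance under diagonal matrices makes `𝓛(x, ·)` homogeneous, hence (being differentiable)
linear, in each column of `p`, and covariance under transpositions makes it alternating in the
columns. So `∂𝓛/∂p_A^k` is `𝓛` with its last column replaced by `e_A`, which does not involve
that column, and `δ̄𝓛(x, p̂) = (−1)^{k−1} Σ_A ∂_A 𝓛(x, (p̂ | e_A))`. This formula passes column
linearity, alternation and covariance (through `diag(g, 1)`) on to `δ̄𝓛`, and a function that is
linear and alternating in the columns satisfies the fundamental equations. Finally `δ̄δ̄𝓛(x, q)` is,
up to sign, `Σ_{A,B} ∂_B ∂_A 𝓛(x, (q | e_B | e_A))`, whose summand is antisymmetric in `(A, B)` by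
alternation and symmetric by Schwarz's theorem.
-/

open Filter Topology Set

section PartialDerivatives

variable {n : ℕ} {f g : (Fin n → ℝ) → ℝ} {x : Fin n → ℝ} {U : Set (Fin n → ℝ)}

lemma pdV_eq_lineDeriv (f : (Fin n → ℝ) → ℝ) (A : Fin n) (x : Fin n → ℝ) :
    pdV f A x = lineDeriv ℝ f x (Pi.single A 1) := by
  unfold pdV lineDeriv
  congr! 3 with t
  ext i
  by_cases h : i = A <;> simp [h]

lemma pdV_eq_fderiv (hf : DifferentiableAt ℝ f x) (A : Fin n) :
    pdV f A x = fderiv ℝ f x (Pi.single A 1) := by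
  rw [pdV_eq_lineDeriv, hf.lineDeriv_eq_fderiv]

lemma Filter.EventuallyEq.pdV_eq (h : f =ᶠ[𝓝 x] g) (A : Fin n) : pdV f A x = pdV g A x := by
  rw [pdV_eq_lineDeriv, pdV_eq_lineDeriv, h.lineDeriv_eq]

lemma pdV_congr_of_eqOn (hU : IsOpen U) (h : EqOn f g U) (hx : x ∈ U) (A : Fin n) :
    pdV f A x = pdV g A x :=
  (eventuallyEq_of_mem (hU.mem_nhds hx) h).pdV_eq A

lemma pdV_neg (f : (Fin n → ℝ) → ℝ) (A : Fin n) (x : Fin n → ℝ) :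
    pdV (fun y => -f y) A x = -pdV f A x :=
  deriv.neg

lemma pdV_const_mul (a : ℝ) (f : (Fin n → ℝ) → ℝ) (A : Fin n) (x : Fin n → ℝ) :
    pdV (fun y => a * f y) A x = a * pdV f A x :=
  deriv_const_mul_field a

lemma pdV_fun_sum {ι : Type*} {s : Finset ι} {F : ι → (Fin n → ℝ) → ℝ}
    (hF : ∀ i ∈ s, DifferentiableAt ℝ (F i) x) (A : Fin n) :
    pdV (fun y => ∑ i ∈ s, F i y) A x = ∑ i ∈ s, pdV (F i) A x := by
  rw [pdV_eq_fderiv (DifferentiableAt.fun_sum hF), fderiv_fun_sum hF]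
  simp only [FunLike.coe_sum, Finset.sum_apply]
  exact Finset.sum_congr rfl fun i hi => (pdV_eq_fderiv (hF i hi) A).symm

lemma pdV_fun_add_mul (hf : DifferentiableAt ℝ f x) (hg : DifferentiableAt ℝ g x) (t : ℝ)
    (A : Fin n) : pdV (fun y => f y + t * g y) A x = pdV f A x + t * pdV g A x := by
  rw [pdV_eq_fderiv (hf.fun_add (hg.const_mul t)), fderiv_fun_add hf (hg.const_mul t),
    fderiv_const_mul hg, pdV_eq_fderiv hf, pdV_eq_fderiv hg]
  simp

lemma pdV_eventuallyEq_fderiv (hU : IsOpen U) (hf : ContDiffOn ℝ 1 f U) (hx : x ∈ U)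
    (A : Fin n) : pdV f A =ᶠ[𝓝 x] fun y => fderiv ℝ f y (Pi.single A 1) := by
  filter_upwards [hU.mem_nhds hx] with y hy
  exact pdV_eq_fderiv
    ((hf.differentiableOn one_ne_zero y hy).differentiableAt (hU.mem_nhds hy)) A

lemma differentiableAt_pdV (hU : IsOpen U) (hf : ContDiffOn ℝ 2 f U) (hx : x ∈ U) (A : Fin n) :
    DifferentiableAt ℝ (pdV f A) x := by
  have hf' : ContDiffOn ℝ 1 (fderiv ℝ f) U := hf.fderiv_of_isOpen hU le_rfl
  refine DifferentiableAt.congr_of_eventuallyEq ?_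
    (pdV_eventuallyEq_fderiv hU (hf.of_le one_le_two) hx A)
  exact ((hf'.differentiableOn one_ne_zero x hx).differentiableAt (hU.mem_nhds hx)).clm_apply
    (differentiableAt_const _)

lemma pdV_pdV_eq_fderiv_fderiv (hU : IsOpen U) (hf : ContDiffOn ℝ 2 f U) (hx : x ∈ U)
    (A B : Fin n) :
    pdV (pdV f A) B x = fderiv ℝ (fderiv ℝ f) x (Pi.single B 1) (Pi.single A 1) := by
  have hf' : DifferentiableAt ℝ (fderiv ℝ f) x :=
    ((hf.fderiv_of_isOpen hU le_rfl).differentiableOn one_ne_zero x hx).differentiableAt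
      (hU.mem_nhds hx)
  rw [(pdV_eventuallyEq_fderiv hU (hf.of_le one_le_two) hx A).pdV_eq,
    pdV_eq_fderiv (hf'.clm_apply (differentiableAt_const _)),
    fderiv_clm_apply hf' (differentiableAt_const _)]
  simp

lemma pdV_pdV_comm (hU : IsOpen U) (hf : ContDiffOn ℝ 2 f U) (hx : x ∈ U) (A B : Fin n) :
    pdV (pdV f A) B x = pdV (pdV f B) A x := by
  rw [pdV_pdV_eq_fderiv_fderiv hU hf hx, pdV_pdV_eq_fderiv_fderiv hU hf hx]
  exact ((hf.contDiffAt (hU.mem_nhds hx)).isSymmSndFDerivAt (by simp)) _ _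

lemma sum_pdV_sum_pdV_eq_zero_of_antisymm (hU : IsOpen U)
    {F : Fin n → Fin n → (Fin n → ℝ) → ℝ} (hF : ∀ A B, ContDiffOn ℝ 2 (F A B) U)
    (hanti : ∀ A B, ∀ y ∈ U, F A B y = -F B A y) (hx : x ∈ U) :
    ∑ B, pdV (fun y => ∑ A, pdV (F A B) A y) B x = 0 := by
  set T : Fin n → Fin n → ℝ := fun A B => pdV (pdV (F A B) A) B x
  have hT : ∀ A B, T A B = -T B A := by
    intro A B
    have hpdV : EqOn (pdV (F A B) B) (fun y => -pdV (F B A) B y) U := fun y hy =>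
      (pdV_congr_of_eqOn hU (hanti A B) hy B).trans (pdV_neg _ _ _)
    simp only [T]
    rw [pdV_pdV_comm hU (hF A B) hx, pdV_congr_of_eqOn hU hpdV hx, pdV_neg]
  have hsum : ∑ B, pdV (fun y => ∑ A, pdV (F A B) A y) B x = ∑ B, ∑ A, T A B :=
    Finset.sum_congr rfl fun B _ =>
      pdV_fun_sum (fun A _ => differentiableAt_pdV hU (hF A B) hx A) B
  have hneg : ∑ B, ∑ A, T A B = -∑ B, ∑ A, T A B :=
    calc ∑ B, ∑ A, T A B = ∑ B, ∑ A, -T B A :=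
          Finset.sum_congr rfl fun B _ => Finset.sum_congr rfl fun A _ => hT A B
      _ = -∑ B, ∑ A, T A B := by rw [Finset.sum_comm]; simp
  rw [hsum]
  linarith

lemma contDiffOn_pdV_fst {E : Type*} [NormedAddCommGroup E] [NormedSpace ℝ E]
    (hU : IsOpen U) {Φ : (Fin n → ℝ) × E → ℝ} (hΦ : ContDiffOn ℝ (⊤ : ℕ∞) Φ (U ×ˢ univ))
    (A : Fin n) :
    ContDiffOn ℝ (⊤ : ℕ∞) (fun q : (Fin n → ℝ) × E => pdV (fun y => Φ (y, q.2)) A q.1)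
      (U ×ˢ univ) := by
  have hopen : IsOpen (U ×ˢ (univ : Set E)) := hU.prod isOpen_univ
  refine ((hΦ.fderiv_of_isOpen hopen (by exact_mod_cast le_top)).clm_apply
    (contDiffOn_const (c := ((Pi.single A 1, 0) : (Fin n → ℝ) × E)))).congr ?_
  rintro ⟨y, e⟩ hq
  have hΦq : HasFDerivAt Φ (fderiv ℝ Φ (y, e)) (y, e) :=
    ((hΦ.differentiableOn (by simp) _ hq).differentiableAt (hopen.mem_nhds hq)).hasFDerivAt
  have hslice := hΦq.comp (f := fun z => (z, e)) y (hasFDerivAt_prodMk_left (𝕜 := ℝ) y e)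
  exact (pdV_eq_fderiv hslice.differentiableAt A).trans (by simp [hslice.fderiv])

end PartialDerivatives

section ColumnLinear

variable {n k : ℕ}

/-- `Matrix.updateCol` on plain functions: rewriting with `Matrix.updateCol` lemmas inside
`mmul`, `pdM` or `L x` fails, since these expect `Fin n → Fin k → ℝ` rather than `Matrix`. -/
def updateColumn (m : Fin n → Fin k → ℝ) (K : Fin k) (c : Fin n → ℝ) :
    Fin n → Fin k → ℝ :=
  fun B => Function.update (m B) K (c B)

lemma contDiff_updateColumn (m : Fin n → Fin k → ℝ) (K : Fin k) :
    ContDiff ℝ (⊤ : ℕ∞) (updateColumn m K) :=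
  contDiff_pi.2 fun B => (contDiff_update _ (m B) K).comp (contDiff_apply ℝ ℝ B)

lemma updateColumn_self (m : Fin n → Fin k → ℝ) (K : Fin k) :
    updateColumn m K (fun B => m B K) = m :=
  funext fun B => Function.update_eq_self K (m B)

lemma updateColumn_idem (m : Fin n → Fin k → ℝ) (K : Fin k) (a b : Fin n → ℝ) :
    updateColumn (updateColumn m K a) K b = updateColumn m K b :=
  funext fun _ => Function.update_idem _ _ _

lemma updateColumn_comm {K K' : Fin k} (h : K ≠ K') (m : Fin n → Fin k → ℝ)
    (a b : Fin n → ℝ) :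
    updateColumn (updateColumn m K a) K' b = updateColumn (updateColumn m K' b) K a :=
  funext fun _ => Function.update_comm h _ _ _

lemma pdM_eq_deriv_updateColumn (F : (Fin n → Fin k → ℝ) → ℝ) (A : Fin n) (K : Fin k)
    (m : Fin n → Fin k → ℝ) :
    pdM F A K m = deriv (fun t : ℝ =>
      F (updateColumn m K ((fun B => m B K) + t • Pi.single A 1))) 0 := by
  unfold pdM
  congr! 3 with t
  funext i j
  by_cases hj : j = K <;> by_cases hi : i = A <;> simp [updateColumn, hi, hj]

lemma pdM_eq_of_affine {F : (Fin n → Fin k → ℝ) → ℝ} {A : Fin n} {K : Fin k}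
    {m : Fin n → Fin k → ℝ} {D : ℝ}
    (h : ∀ t : ℝ, F (updateColumn m K ((fun B => m B K) + t • Pi.single A 1)) = F m + t * D) :
    pdM F A K m = D := by
  rw [pdM_eq_deriv_updateColumn, funext h]
  simp

def ColumnLinear (F : (Fin n → Fin k → ℝ) → ℝ) : Prop :=
  ∀ (m : Fin n → Fin k → ℝ) (K : Fin k) (a b : Fin n → ℝ) (t : ℝ),
    F (updateColumn m K (a + t • b)) = F (updateColumn m K a) + t * F (updateColumn m K b)

def ColumnAlternating (F : (Fin n → Fin k → ℝ) → ℝ) : Prop :=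
  ∀ (m : Fin n → Fin k → ℝ) {K K' : Fin k}, K ≠ K' → ∀ a b : Fin n → ℝ,
    F (updateColumn (updateColumn m K a) K' b) = -F (updateColumn (updateColumn m K b) K' a)

variable {F : (Fin n → Fin k → ℝ) → ℝ}

lemma ColumnLinear.pdM_eq (hF : ColumnLinear F) (A : Fin n) (K : Fin k)
    (m : Fin n → Fin k → ℝ) : pdM F A K m = F (updateColumn m K (Pi.single A 1)) :=
  pdM_eq_of_affine fun t => by rw [hF, updateColumn_self]

lemma fundEqs_of_columnLinear (hlin : ColumnLinear F) (halt : ColumnAlternating F) :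
    FundEqs F := by
  intro i₁ i₂ j₁ j₂ m
  simp only [hlin.pdM_eq]
  by_cases hj : j₁ = j₂
  · subst hj
    have hconst : ∀ i i' : Fin n,
        pdM (fun m' => F (updateColumn m' j₁ (Pi.single i 1))) i' j₁ m = 0 :=
      fun i i' => pdM_eq_of_affine fun t => by simp [updateColumn_idem]
    rw [hconst, hconst, add_zero]
  · have hswap : ∀ i i' : Fin n,
        pdM (fun m' => F (updateColumn m' j₂ (Pi.single i 1))) i' j₁ m
          = F (updateColumn (updateColumn m j₁ (Pi.single i' 1)) j₂ (Pi.single i 1)) := by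
      intro i i'
      refine pdM_eq_of_affine fun t => ?_
      rw [updateColumn_comm hj, hlin, ← updateColumn_comm hj, updateColumn_self,
        ← updateColumn_comm hj]
    rw [hswap, hswap, halt _ hj]
    ring

end ColumnLinear

lemma apply_eq_fderiv_zero_of_homogeneous {𝕜 E F : Type*} [NontriviallyNormedField 𝕜]
    [NormedAddCommGroup E] [NormedSpace 𝕜 E] [NormedAddCommGroup F] [NormedSpace 𝕜 F]
    {f : E → F} (hf : DifferentiableAt 𝕜 f 0) (hom : ∀ (s : 𝕜) (c : E), f (s • c) = s • f c)
    (c : E) : f c = fderiv 𝕜 f 0 c := by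
  have hline : HasDerivAt (fun s : 𝕜 => s • c) c 0 := by
    simpa using (hasDerivAt_id (0 : 𝕜)).smul_const c
  have hf0 : HasFDerivAt f (fderiv 𝕜 f 0) ((0 : 𝕜) • c) := by
    rw [zero_smul]; exact hf.hasFDerivAt
  have hchain : HasDerivAt (fun s : 𝕜 => f (s • c)) (fderiv 𝕜 f 0 c) 0 :=
    hf0.comp_hasDerivAt 0 hline
  have hhom : HasDerivAt (fun s : 𝕜 => f (s • c)) (f c) 0 := by
    simp_rw [hom]
    simpa using (hasDerivAt_id (0 : 𝕜)).smul_const (f c)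
  exact hhom.unique hchain

section Matrices

variable {n k : ℕ}

lemma fdet_diagonal (d : Fin k → ℝ) : fdet (Matrix.diagonal d) = ∏ J, d J :=
  Matrix.det_diagonal

lemma mmul_diagonal (m : Fin n → Fin k → ℝ) (d : Fin k → ℝ) :
    mmul m (Matrix.diagonal d) = fun B J => m B J * d J :=
  funext fun B => funext fun J => Matrix.vecMul_diagonal (m B) d J

lemma fdet_permMatrix (σ : Equiv.Perm (Fin k)) :
    fdet (σ.permMatrix ℝ) = Equiv.Perm.sign σ :=
  Matrix.det_permutation σ

lemma mmul_permMatrix (m : Fin n → Fin k → ℝ) (σ : Equiv.Perm (Fin k)) :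
    mmul m (σ.permMatrix ℝ) = fun B => m B ∘ σ.symm :=
  funext fun _ => Matrix.vecMul_permMatrix σ

end Matrices

section SnocColumn

variable {n k : ℕ}

def snocCol (p : Fin n → Fin k → ℝ) (c : Fin n → ℝ) : Fin n → Fin (k + 1) → ℝ :=
  fun B => Fin.snoc (p B) (c B)

lemma updateColumn_snocCol_last (p : Fin n → Fin k → ℝ) (c v : Fin n → ℝ) :
    updateColumn (snocCol p c) (Fin.last k) v = snocCol p v :=
  funext fun B => Fin.update_snoc_last (α := fun _ => ℝ) (c B) (p B) (v B)

lemma updateColumn_snocCol_castSucc (p : Fin n → Fin k → ℝ) (c : Fin n → ℝ) (K : Fin k)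
    (v : Fin n → ℝ) :
    updateColumn (snocCol p c) K.castSucc v = snocCol (updateColumn p K v) c :=
  funext fun B => (Fin.snoc_update (α := fun _ => ℝ) (c B) (p B) K (v B)).symm

def blockDiagOne (g : Fin k → Fin k → ℝ) : Fin (k + 1) → Fin (k + 1) → ℝ :=
  Matrix.reindex finSumFinEquiv finSumFinEquiv
    (Matrix.fromBlocks (Matrix.of g) 0 0 (1 : Matrix (Fin 1) (Fin 1) ℝ))

lemma fdet_blockDiagOne (g : Fin k → Fin k → ℝ) : fdet (blockDiagOne g) = fdet g := by
  show Matrix.det (Matrix.reindex finSumFinEquiv finSumFinEquiv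
    (Matrix.fromBlocks (Matrix.of g) 0 0 (1 : Matrix (Fin 1) (Fin 1) ℝ))) = _
  rw [Matrix.det_reindex_self, Matrix.det_fromBlocks_zero₂₁, Matrix.det_one, mul_one]
  rfl

lemma mmul_snocCol_blockDiagOne (p : Fin n → Fin k → ℝ) (c : Fin n → ℝ)
    (g : Fin k → Fin k → ℝ) :
    mmul (snocCol p c) (blockDiagOne g) = snocCol (mmul p g) c := by
  funext B J
  induction J using Fin.lastCases with
  | last => simp [mmul, snocCol, blockDiagOne, Fin.sum_univ_castSucc]
  | cast J => simp [mmul, snocCol, blockDiagOne, Fin.sum_univ_castSucc]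

lemma ColumnAlternating.apply_snocCol_snocCol {F : (Fin n → Fin (k + 2) → ℝ) → ℝ}
    (hF : ColumnAlternating F) (q : Fin n → Fin k → ℝ) (a b : Fin n → ℝ) :
    F (snocCol (snocCol q a) b) = -F (snocCol (snocCol q b) a) := by
  have hsnoc : ∀ a b : Fin n → ℝ, snocCol (snocCol q a) b = updateColumn
      (updateColumn (snocCol (snocCol q 0) 0) (Fin.last k).castSucc a) (Fin.last (k + 1)) b := by
    intro a b
    rw [updateColumn_snocCol_castSucc, updateColumn_snocCol_last, updateColumn_snocCol_last]
  rw [hsnoc a b, hsnoc b a]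
  exact hF _ (Fin.castSucc_lt_last _).ne _ _

end SnocColumn

namespace IsDualForm

variable {n k : ℕ} {U : Set (Fin n → ℝ)} {x : Fin n → ℝ}

section

variable {L : (Fin n → ℝ) → (Fin n → Fin k → ℝ) → ℝ}

lemma contDiff_of_mem (hL : IsDualForm U L) (hx : x ∈ U) : ContDiff ℝ (⊤ : ℕ∞) (L x) := by
  rw [← contDiffOn_univ]
  exact hL.1.comp (contDiff_const.prodMk contDiff_id).contDiffOn fun _ _ => ⟨hx, trivial⟩

lemma contDiffOn_apply_const (hL : IsDualForm U L) (M : Fin n → Fin k → ℝ) :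
    ContDiffOn ℝ (⊤ : ℕ∞) (fun y => L y M) U :=
  hL.1.comp (contDiff_id.prodMk contDiff_const).contDiffOn fun _ hy => ⟨hy, trivial⟩

lemma differentiableAt_apply_const (hU : IsOpen U) (hL : IsDualForm U L) (hx : x ∈ U)
    (M : Fin n → Fin k → ℝ) : DifferentiableAt ℝ (fun y => L y M) x :=
  ((hL.contDiffOn_apply_const M).differentiableOn (by simp) x hx).differentiableAt
    (hU.mem_nhds hx)

lemma apply_updateColumn_smul_of_ne_zero (hL : IsDualForm U L) (hx : x ∈ U)
    (m : Fin n → Fin k → ℝ) (K : Fin k) {s : ℝ} (hs : s ≠ 0) (c : Fin n → ℝ) :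
    L x (updateColumn m K (s • c)) = s * L x (updateColumn m K c) := by
  have hdet : fdet (Matrix.diagonal (Function.update 1 K s)) = s := by
    simp [fdet_diagonal, Finset.prod_update_of_mem]
  have hmul : mmul (updateColumn m K c) (Matrix.diagonal (Function.update 1 K s))
      = updateColumn m K (s • c) := by
    rw [mmul_diagonal]
    funext B J
    by_cases hJ : J = K
    · subst hJ; simp [updateColumn, mul_comm]
    · simp [updateColumn, hJ]
  have hcov := hL.2.1 x hx (updateColumn m K c) _ (hdet ▸ hs)
  rwa [hmul, hdet] at hcov

lemma apply_updateColumn_smul (hL : IsDualForm U L) (hx : x ∈ U) (m : Fin n → Fin k → ℝ)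
    (K : Fin k) (s : ℝ) (c : Fin n → ℝ) :
    L x (updateColumn m K (s • c)) = s * L x (updateColumn m K c) := by
  rcases eq_or_ne s 0 with rfl | hs
  · -- doubling a zero column changes nothing, so `L` vanishes on it
    have h0 := hL.apply_updateColumn_smul_of_ne_zero hx m K two_ne_zero 0
    rw [smul_zero] at h0
    rw [zero_smul, zero_mul]
    linarith
  · exact hL.apply_updateColumn_smul_of_ne_zero hx m K hs c

lemma columnLinear (hL : IsDualForm U L) (hx : x ∈ U) : ColumnLinear (L x) := by
  intro m K a b t
  have hlin := apply_eq_fderiv_zero_of_homogeneous (f := fun c => L x (updateColumn m K c))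
    (((hL.contDiff_of_mem hx).comp (contDiff_updateColumn m K)).differentiable (by simp) 0)
    (hL.apply_updateColumn_smul hx m K)
  rw [hlin, hlin a, hlin b, map_add, map_smul, smul_eq_mul]

lemma columnAlternating (hL : IsDualForm U L) (hx : x ∈ U) : ColumnAlternating (L x) := by
  intro m K K' hK a b
  have hswap : mmul (updateColumn (updateColumn m K b) K' a) ((Equiv.swap K K').permMatrix ℝ)
      = updateColumn (updateColumn m K a) K' b := by
    rw [mmul_permMatrix]
    funext B J
    simp only [Function.comp_apply, Equiv.symm_swap, updateColumn, Function.update_apply]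
    by_cases h' : J = K' <;> by_cases h : J = K <;> simp_all [Equiv.swap_apply_of_ne_of_ne]
  have hdet : fdet ((Equiv.swap K K').permMatrix ℝ) = -1 := by
    simp [fdet_permMatrix, Equiv.Perm.sign_swap hK]
  have hcov := hL.2.1 x hx (updateColumn (updateColumn m K b) K' a) _
    (hdet.symm ▸ neg_ne_zero.2 one_ne_zero)
  rwa [hswap, hdet, neg_one_mul] at hcov

end

section

variable {L : (Fin n → ℝ) → (Fin n → Fin (k + 1) → ℝ) → ℝ}

lemma pdM_last_snocCol (hL : IsDualForm U L) (hx : x ∈ U) (A : Fin n)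
    (p : Fin n → Fin k → ℝ) (c : Fin n → ℝ) :
    pdM (L x) A (Fin.last k) (snocCol p c) = L x (snocCol p (Pi.single A 1)) := by
  rw [(hL.columnLinear hx).pdM_eq, updateColumn_snocCol_last]

lemma dbar_eq (hU : IsOpen U) (hL : IsDualForm U L) (hx : x ∈ U) (p : Fin n → Fin k → ℝ) :
    dbar k L x p = (-1) ^ k * ∑ A, pdV (fun y => L y (snocCol p (Pi.single A 1))) A x :=
  congrArg _ <| Finset.sum_congr rfl fun A _ =>
    pdV_congr_of_eqOn hU (fun _ hy => hL.pdM_last_snocCol hy A p 0) hx A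

lemma columnLinear_dbar (hU : IsOpen U) (hL : IsDualForm U L) (hx : x ∈ U) :
    ColumnLinear (dbar k L x) := by
  intro p K a b t
  simp only [hL.dbar_eq hU hx, ← updateColumn_snocCol_castSucc]
  have hA : ∀ A, pdV (fun y => L y (updateColumn (snocCol p (Pi.single A 1)) K.castSucc
        (a + t • b))) A x
      = pdV (fun y => L y (updateColumn (snocCol p (Pi.single A 1)) K.castSucc a)) A x
        + t * pdV (fun y => L y (updateColumn (snocCol p (Pi.single A 1)) K.castSucc b)) A x := by
    intro A
    rw [← pdV_fun_add_mul (hL.differentiableAt_apply_const hU hx _)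
      (hL.differentiableAt_apply_const hU hx _)]
    exact pdV_congr_of_eqOn hU (fun y hy => hL.columnLinear hy _ _ _ _ _) hx A
  simp only [hA, Finset.sum_add_distrib, ← Finset.mul_sum]
  ring

lemma columnAlternating_dbar (hU : IsOpen U) (hL : IsDualForm U L) (hx : x ∈ U) :
    ColumnAlternating (dbar k L x) := by
  intro p K K' hK a b
  have hK' : K.castSucc ≠ K'.castSucc := Fin.castSucc_injective _ |>.ne hK
  simp only [hL.dbar_eq hU hx, ← updateColumn_snocCol_castSucc, ← mul_neg,
    ← Finset.sum_neg_distrib, ← pdV_neg]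
  exact congrArg _ <| Finset.sum_congr rfl fun A _ =>
    pdV_congr_of_eqOn hU (fun y hy => hL.columnAlternating hy _ hK' _ _) hx A

lemma dbar_mmul (hU : IsOpen U) (hL : IsDualForm U L) (hx : x ∈ U) (p : Fin n → Fin k → ℝ)
    (g : Fin k → Fin k → ℝ) (hg : fdet g ≠ 0) :
    dbar k L x (mmul p g) = fdet g * dbar k L x p := by
  have hA : ∀ A, pdV (fun y => L y (snocCol (mmul p g) (Pi.single A 1))) A x
      = fdet g * pdV (fun y => L y (snocCol p (Pi.single A 1))) A x := by
    intro A
    rw [← pdV_const_mul]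
    refine pdV_congr_of_eqOn hU (fun y hy => ?_) hx A
    rw [← mmul_snocCol_blockDiagOne, hL.2.1 y hy _ _ (by rwa [fdet_blockDiagOne]),
      fdet_blockDiagOne]
  simp only [hL.dbar_eq hU hx, hA, ← Finset.mul_sum]
  ring

lemma contDiffOn_dbar (hU : IsOpen U) (hL : IsDualForm U L) :
    ContDiffOn ℝ (⊤ : ℕ∞) (fun q : (Fin n → ℝ) × (Fin n → Fin k → ℝ) => dbar k L q.1 q.2)
      (U ×ˢ univ) := by
  have hsnoc : ∀ A : Fin n, ContDiff ℝ (⊤ : ℕ∞)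
      (fun q : (Fin n → ℝ) × (Fin n → Fin k → ℝ) => (q.1, snocCol q.2 (Pi.single A 1))) := by
    intro A
    refine contDiff_fst.prodMk (contDiff_pi.2 fun B => contDiff_pi.2 fun J => ?_)
    induction J using Fin.lastCases with
    | last => simpa [snocCol] using contDiff_const
    | cast J => simpa [snocCol] using contDiff_pi.1 (contDiff_pi.1 contDiff_snd B) J
  have hterm : ∀ A : Fin n, ContDiffOn ℝ (⊤ : ℕ∞)
      (fun q : (Fin n → ℝ) × (Fin n → Fin k → ℝ) => L q.1 (snocCol q.2 (Pi.single A 1)))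
      (U ×ˢ univ) :=
    fun A => hL.1.comp (hsnoc A).contDiffOn fun q hq => ⟨hq.1, trivial⟩
  refine ((contDiffOn_const (c := (-1 : ℝ) ^ k)).mul (ContDiffOn.sum (s := Finset.univ)
    fun A _ => contDiffOn_pdV_fst hU (hterm A) A)).congr ?_
  rintro ⟨y, p⟩ ⟨hy, -⟩
  exact hL.dbar_eq hU hy p

lemma isDualForm_dbar (hU : IsOpen U) (hL : IsDualForm U L) : IsDualForm U (dbar k L) :=
  ⟨hL.contDiffOn_dbar hU, fun _ hx p g hg => hL.dbar_mmul hU hx p g hg,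
    fun _ hx => fundEqs_of_columnLinear (hL.columnLinear_dbar hU hx)
      (hL.columnAlternating_dbar hU hx)⟩

end

lemma dbar_dbar {L : (Fin n → ℝ) → (Fin n → Fin (k + 2) → ℝ) → ℝ} (hU : IsOpen U)
    (hL : IsDualForm U L) (hx : x ∈ U) (q : Fin n → Fin k → ℝ) :
    dbar k (dbar (k + 1) L) x q = 0 := by
  set f : Fin n → Fin n → (Fin n → ℝ) → ℝ :=
    fun A B y => L y (snocCol (snocCol q (Pi.single B 1)) (Pi.single A 1))
  have hinner : ∀ B, pdV (fun y => dbar (k + 1) L y (snocCol q (Pi.single B 1))) B x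
      = (-1) ^ (k + 1) * pdV (fun y => ∑ A, pdV (f A B) A y) B x := by
    intro B
    rw [← pdV_const_mul]
    exact pdV_congr_of_eqOn hU (fun y hy => hL.dbar_eq hU hy _) hx B
  have hf : ∀ A B, ContDiffOn ℝ 2 (f A B) U :=
    fun A B => (hL.contDiffOn_apply_const _).of_le (WithTop.coe_le_coe.2 le_top)
  have hanti : ∀ A B, ∀ y ∈ U, f A B y = -f B A y :=
    fun A B y hy => (hL.columnAlternating hy).apply_snocCol_snocCol _ _ _
  rw [(hL.isDualForm_dbar hU).dbar_eq hU hx]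
  simp only [hinner, ← Finset.mul_sum, sum_pdV_sum_pdV_eq_zero_of_antisymm hU hf hanti hx,
    mul_zero]

end IsDualForm

/-- For an even dual form `𝓛` of codegree `k+1` on `U`:
`∂𝓛/∂p_A^{k+1}` does not depend on the last column of `p`; hence `δ̄𝓛` is
well-defined (independent of the appended last column); `δ̄𝓛` is an even dual form
of codegree `k` on `U`; and, when `k ≥ 1`, `δ̄(δ̄𝓛) = 0`. -/
theorem statement_18 (n k : ℕ) (U : Set (Fin n → ℝ)) (hU : IsOpen U)
    (L : (Fin n → ℝ) → (Fin n → Fin (k + 1) → ℝ) → ℝ) (hL : IsDualForm U L) :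
    (∀ x ∈ U, ∀ (A : Fin n) (p : Fin n → Fin k → ℝ) (c c' : Fin n → ℝ),
        pdM (L x) A (Fin.last k) (fun B => Fin.snoc (p B) (c B))
          = pdM (L x) A (Fin.last k) (fun B => Fin.snoc (p B) (c' B))) ∧
    (∀ x ∈ U, ∀ (p : Fin n → Fin k → ℝ) (c : Fin n → ℝ),
        (-1 : ℝ) ^ k * ∑ A,
            pdV (fun x' => pdM (L x') A (Fin.last k)
              (fun B => Fin.snoc (p B) (c B))) A x
          = dbar k L x p) ∧
    IsDualForm U (dbar k L) ∧
    (∀ (m : ℕ) (h : k = m + 1), ∀ x ∈ U, ∀ q : Fin n → Fin m → ℝ,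
        dbar m (fun x' (P : Fin n → Fin (m + 1) → ℝ) =>
          dbar k L x' (fun A J => P A (Fin.cast h J))) x q = 0) := by
  refine ⟨fun x hx A p c c' => ?_, fun x hx p c => ?_, hL.isDualForm_dbar hU, ?_⟩
  · exact (hL.pdM_last_snocCol hx A p c).trans (hL.pdM_last_snocCol hx A p c').symm
  · rw [hL.dbar_eq hU hx]
    exact congrArg _ <| Finset.sum_congr rfl fun A _ =>
      pdV_congr_of_eqOn hU (fun y hy => hL.pdM_last_snocCol hy A p c) hx A
  · rintro m rfl x hx q
    exact hL.dbar_dbar hU hx q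
end
end
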